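/- arXiv:2406.11298 — 2 statements merged into one kernel-verified Lean document; each statement's English description precedes it below -/
import Mathlib

section
/- Let -∞ ≤ a < b ≤ ∞, let α > 0, let n ∈ ℤ, let {x_k}_{k=n}^∞ ⊂ (a,b) be a strictly increasing sequence, let {τ_k}_{k=n+1}^∞ be a geometrically decreasing sequence of positive numbers (i.e. sup_{k≥n+1} τ_{k+1}/τ_k < 1), and let {σ_k}_{k=n}^∞ be a positive nondecreasing sequence. Then there exist positive constants c₁, c₂ (depending only on α and the geometric decay ratio) such that for every nonnegative measurable function g on (a,b): c₁ · Σ_{k=n+1}^∞ τ_k (∫_{x_{k-1}}^{x_k} g)^α σ_{k-1} ≤ Σ_{k=n+1}^∞ τ_k · sup_{n≤i<k} (∫_{x_i}^{x_k} g)^α σ_i ≤ c₂ · Σ_{k=n+1}^∞ τ_k (∫_{x_{k-1}}^{x_k} g)^α σ_{k-1}. -/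
/-
The lower bound is termwise: take `i = k - 1` in the supremum.

For the upper bound write `∫_{x_i}^{x_k} g ≤ Σ_{i<j≤k} I_j` with `I_j = ∫_{x_{j-1}}^{x_j} g`. Fix
`0 < θ < 1` and write `I_j = θ^(k-j) · (θ^(-(k-j)) I_j)`; bounding every bracket by the largest one
gives `(Σ_j I_j)^α ≤ (1-θ)^(-α) Σ_j θ^(-(k-j)α) I_j^α` for every `α > 0`, and `σ_i ≤ σ_{j-1}`
because `σ` is nondecreasing. The loss `θ^(-(k-j)α)` is absorbed by the decay
`τ_k ≤ ρ^(k-j) τ_j` once `ρ < θ^α`: summing over `k ≥ j` leaves a geometric series of ratio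
`ρ / θ^α`, so `c₂ = (1-θ)^(-α) (1 - ρ/θ^α)^(-1)`.
-/

open MeasureTheory ENNReal Set

noncomputable section

/-- The open interval `(a, b)` of real numbers, with extended-real endpoints. -/
def Iab (a b : EReal) : Set ℝ := {x : ℝ | a < (x : EReal) ∧ (x : EReal) < b}

section Intervals

variable {X : Type*} [LinearOrder X] [MeasurableSpace X] (μ : Measure X) (f : X → ℝ≥0∞)
  (y : ℕ → X)

theorem setLIntegral_Ioc_le_sum {i k : ℕ} (hik : i ≤ k) :
    ∫⁻ s in Ioc (y i) (y k), f s ∂μ ≤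
      ∑ j ∈ Finset.Ico i k, ∫⁻ s in Ioc (y j) (y (j + 1)), f s ∂μ := by
  induction k, hik using Nat.le_induction with
  | base => simp
  | succ k hik ih =>
    calc ∫⁻ s in Ioc (y i) (y (k + 1)), f s ∂μ
        ≤ (∫⁻ s in Ioc (y i) (y k), f s ∂μ) + ∫⁻ s in Ioc (y k) (y (k + 1)), f s ∂μ :=
          (lintegral_mono_set Ioc_subset_Ioc_union_Ioc).trans (lintegral_union_le _ _ _)
      _ ≤ _ := by rw [Finset.sum_Ico_succ_top hik]; gcongr

theorem setLIntegral_Ioo_le_sum [NullSingletonClass μ] {i k : ℕ} (hik : i ≤ k) :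
    ∫⁻ s in Ioo (y i) (y k), f s ∂μ ≤
      ∑ j ∈ Finset.Ico i k, ∫⁻ s in Ioo (y j) (y (j + 1)), f s ∂μ := by
  simp only [setLIntegral_congr (Ioo_ae_eq_Ioc (μ := μ))]
  exact setLIntegral_Ioc_le_sum μ f y hik

end Intervals

namespace ENNReal

theorem rpow_sum_mul_le {ι : Type*} (S : Finset ι) (c b : ι → ℝ≥0∞) {α : ℝ} (hα : 0 < α) :
    (∑ j ∈ S, c j * b j) ^ α ≤ (∑ j ∈ S, c j) ^ α * ∑ j ∈ S, b j ^ α := by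
  rcases S.eq_empty_or_nonempty with rfl | hS
  · simp [zero_rpow_of_pos hα]
  obtain ⟨j₀, hj₀, hmax⟩ := S.exists_max_image b hS
  calc (∑ j ∈ S, c j * b j) ^ α ≤ ((∑ j ∈ S, c j) * b j₀) ^ α := by
        rw [Finset.sum_mul]; gcongr with j hj; exact hmax j hj
    _ = (∑ j ∈ S, c j) ^ α * b j₀ ^ α := mul_rpow_of_nonneg _ _ hα.le
    _ ≤ (∑ j ∈ S, c j) ^ α * ∑ j ∈ S, b j ^ α := by
        gcongr; exact Finset.single_le_sum (f := fun j ↦ b j ^ α) (fun _ _ ↦ zero_le) hj₀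

theorem sum_range_pow_sub_le (θ : ℝ≥0∞) (m : ℕ) :
    ∑ j ∈ Finset.range (m + 1), θ ^ (m - j) ≤ (1 - θ)⁻¹ := by
  have h := Finset.sum_range_reflect (fun j ↦ θ ^ j) (m + 1)
  simp only [Nat.add_sub_cancel] at h
  rw [h, ← ENNReal.tsum_geometric]
  exact ENNReal.sum_le_tsum _

theorem tsum_sum_range_pow_sub_mul (p : ℝ≥0∞) (a : ℕ → ℝ≥0∞) :
    ∑' m, ∑ j ∈ Finset.range (m + 1), p ^ (m - j) * a j = (1 - p)⁻¹ * ∑' m, a m := by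
  rw [← ENNReal.tsum_geometric, mul_comm, ← ENNReal.tsum_mul_right]
  simp_rw [← ENNReal.tsum_mul_left]
  rw [← ENNReal.tsum_prod (f := fun j d ↦ a j * p ^ d),
    ← Finset.HasAntidiagonal.sigmaAntidiagonalEquivProd.tsum_eq, ENNReal.tsum_sigma']
  refine tsum_congr fun m ↦ ?_
  rw [← Finset.Nat.sum_antidiagonal_eq_sum_range_succ (fun j d ↦ p ^ d * a j),
    ← Finset.tsum_subtype]
  exact tsum_congr fun x ↦ mul_comm _ _

end ENNReal

theorem le_pow_mul_of_le_mul_add_one {t : ℕ → ℝ≥0∞} {ρ : ℝ≥0∞} (ht : ∀ m, t (m + 1) ≤ ρ * t m)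
    (j d : ℕ) : t (j + d) ≤ ρ ^ d * t j := by
  induction d with
  | zero => simp
  | succ d ih =>
    calc t (j + (d + 1)) ≤ ρ * t (j + d) := ht (j + d)
      _ ≤ ρ * (ρ ^ d * t j) := by gcongr
      _ = ρ ^ (d + 1) * t j := by ring

section Hardy

variable {α : ℝ} {θ : ℝ≥0∞}

theorem iSup_rpow_sum_mul_le (hα : 0 < α) (hθ0 : θ ≠ 0) (hθtop : θ ≠ ∞) {s : ℕ → ℝ≥0∞}
    (hs : Monotone s) (u : ℕ → ℝ≥0∞) (m : ℕ) :
    ⨆ i ≤ m, (∑ j ∈ Finset.Ico i (m + 1), u j) ^ α * s i ≤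
      (1 - θ)⁻¹ ^ α * ∑ j ∈ Finset.range (m + 1), (θ ^ α)⁻¹ ^ (m - j) * (u j ^ α * s j) := by
  refine iSup₂_le fun i _ ↦ ?_
  have hsplit : ∀ j, u j = θ ^ (m - j) * (θ⁻¹ ^ (m - j) * u j) := fun j ↦ by
    rw [← mul_assoc, ← mul_pow, ENNReal.mul_inv_cancel hθ0 hθtop, one_pow, one_mul]
  have hpow : ∀ j, (θ⁻¹ ^ (m - j) * u j) ^ α = (θ ^ α)⁻¹ ^ (m - j) * u j ^ α := fun j ↦ by
    rw [ENNReal.mul_rpow_of_nonneg _ _ hα.le, ← ENNReal.rpow_natCast_mul,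
      mul_comm ((m - j : ℕ) : ℝ), ENNReal.rpow_mul_natCast, ENNReal.inv_rpow]
  have hsub : Finset.Ico i (m + 1) ⊆ Finset.range (m + 1) := by
    rw [Finset.range_eq_Ico]; exact Finset.Ico_subset_Ico_left (Nat.zero_le i)
  calc (∑ j ∈ Finset.Ico i (m + 1), u j) ^ α * s i
      = (∑ j ∈ Finset.Ico i (m + 1), θ ^ (m - j) * (θ⁻¹ ^ (m - j) * u j)) ^ α * s i := by
        rw [Finset.sum_congr rfl fun j _ ↦ hsplit j]
    _ ≤ (∑ j ∈ Finset.Ico i (m + 1), θ ^ (m - j)) ^ α *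
          (∑ j ∈ Finset.Ico i (m + 1), (θ⁻¹ ^ (m - j) * u j) ^ α) * s i := by
        gcongr; exact ENNReal.rpow_sum_mul_le _ _ _ hα
    _ ≤ (1 - θ)⁻¹ ^ α * ∑ j ∈ Finset.Ico i (m + 1), (θ ^ α)⁻¹ ^ (m - j) * (u j ^ α * s j) := by
        have hgeom := (Finset.sum_le_sum_of_subset hsub).trans (ENNReal.sum_range_pow_sub_le θ m)
        rw [mul_assoc, Finset.sum_mul]
        refine mul_le_mul' (by gcongr) (Finset.sum_le_sum fun j hj ↦ ?_)
        rw [hpow, mul_assoc]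
        gcongr
        exact hs (Finset.mem_Ico.1 hj).1
    _ ≤ _ := mul_le_mul_right (Finset.sum_le_sum_of_subset hsub) _

theorem tsum_mul_iSup_rpow_sum_le (hα : 0 < α) (hθ0 : θ ≠ 0) (hθtop : θ ≠ ∞) {ρ : ℝ≥0∞}
    {s t : ℕ → ℝ≥0∞} (hs : Monotone s) (ht : ∀ m, t (m + 1) ≤ ρ * t m) (u : ℕ → ℝ≥0∞) :
    ∑' m, t m * ⨆ i ≤ m, (∑ j ∈ Finset.Ico i (m + 1), u j) ^ α * s i ≤
      (1 - θ)⁻¹ ^ α * (1 - ρ / θ ^ α)⁻¹ * ∑' m, t m * (u m ^ α * s m) := by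
  have hweight : ∀ m j, j ≤ m → t m * (θ ^ α)⁻¹ ^ (m - j) ≤ (ρ / θ ^ α) ^ (m - j) * t j := by
    intro m j hjm
    obtain ⟨d, rfl⟩ := Nat.exists_eq_add_of_le hjm
    rw [Nat.add_sub_cancel_left, div_eq_mul_inv, mul_pow, mul_right_comm]
    gcongr
    exact le_pow_mul_of_le_mul_add_one ht j d
  calc ∑' m, t m * ⨆ i ≤ m, (∑ j ∈ Finset.Ico i (m + 1), u j) ^ α * s i
      ≤ ∑' m, (1 - θ)⁻¹ ^ α *
          ∑ j ∈ Finset.range (m + 1), (ρ / θ ^ α) ^ (m - j) * (t j * (u j ^ α * s j)) := by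
        refine ENNReal.tsum_le_tsum fun m ↦ ?_
        calc t m * ⨆ i ≤ m, (∑ j ∈ Finset.Ico i (m + 1), u j) ^ α * s i
            ≤ t m * ((1 - θ)⁻¹ ^ α *
                ∑ j ∈ Finset.range (m + 1), (θ ^ α)⁻¹ ^ (m - j) * (u j ^ α * s j)) :=
              mul_le_mul_right (iSup_rpow_sum_mul_le hα hθ0 hθtop hs u m) _
          _ = (1 - θ)⁻¹ ^ α *
                ∑ j ∈ Finset.range (m + 1), t m * (θ ^ α)⁻¹ ^ (m - j) * (u j ^ α * s j) := by
              simp_rw [mul_left_comm (t m), Finset.mul_sum, mul_assoc]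
          _ ≤ _ := by
              refine mul_le_mul_right (Finset.sum_le_sum fun j hj ↦ ?_) _
              have hjm := Nat.lt_succ_iff.1 (Finset.mem_range.1 hj)
              exact (mul_le_mul_left (hweight m j hjm) _).trans_eq (mul_assoc _ _ _)
    _ = _ := by rw [ENNReal.tsum_mul_left, ENNReal.tsum_sum_range_pow_sub_mul, mul_assoc]

theorem tsum_mul_iSup_setLIntegral_le (hα : 0 < α) (hθ0 : θ ≠ 0) (hθtop : θ ≠ ∞)
    (μ : Measure ℝ) [NullSingletonClass μ] {ρ : ℝ≥0∞} (n : ℤ) (x : ℤ → ℝ) {τ σ : ℤ → ℝ≥0∞}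
    (hτ : ∀ k, n + 1 ≤ k → τ (k + 1) ≤ ρ * τ k) (hσ : ∀ k, n ≤ k → σ k ≤ σ (k + 1))
    (g : ℝ → ℝ≥0∞) :
    ∑' k : {k : ℤ // n + 1 ≤ k}, τ k.1 * ⨆ (i : ℤ) (_ : n ≤ i ∧ i < k.1),
        (∫⁻ s in Ioo (x i) (x k.1), g s ∂μ) ^ α * σ i ≤
      (1 - θ)⁻¹ ^ α * (1 - ρ / θ ^ α)⁻¹ * ∑' k : {k : ℤ // n + 1 ≤ k},
        τ k.1 * ((∫⁻ s in Ioo (x (k.1 - 1)) (x k.1), g s ∂μ) ^ α * σ (k.1 - 1)) := by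
  let e : ℕ ≃ {k : ℤ // n + 1 ≤ k} :=
    ⟨fun m ↦ ⟨n + m + 1, by omega⟩, fun k ↦ (k.1 - n - 1).toNat, fun m ↦ by dsimp only; omega,
      fun k ↦ Subtype.ext (by simp; omega)⟩
  let y : ℕ → ℝ := fun j ↦ x (n + j)
  have hy : ∀ j : ℕ, x (n + j + 1) = y (j + 1) := fun j ↦ by simp [y, add_assoc]
  have hs : Monotone fun j : ℕ ↦ σ (n + j) := monotone_nat_of_le_succ fun j ↦ by
    simpa [add_assoc] using hσ (n + j) (by omega)
  have ht : ∀ j : ℕ, τ (n + ↑(j + 1) + 1) ≤ ρ * τ (n + j + 1) := fun j ↦ by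
    simpa [add_assoc] using hτ (n + j + 1) (by omega)
  rw [← e.tsum_eq, ← e.tsum_eq]
  refine (ENNReal.tsum_le_tsum fun m ↦ ?_).trans
    ((tsum_mul_iSup_rpow_sum_le hα hθ0 hθtop hs ht
      fun j ↦ ∫⁻ s in Ioo (y j) (y (j + 1)), g s ∂μ).trans_eq ?_)
  · simp only [e, Equiv.coe_fn_mk]
    refine mul_le_mul_right (iSup₂_le fun i ⟨hni, hik⟩ ↦ ?_) _
    obtain ⟨i, rfl⟩ : ∃ i' : ℕ, i = n + i' := ⟨(i - n).toNat, by omega⟩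
    refine le_iSup₂_of_le i (by omega) ?_
    rw [hy]
    gcongr
    exact setLIntegral_Ioo_le_sum μ g y (by omega)
  · simp [e, y, add_assoc, add_sub_assoc]

end Hardy

theorem statement12 (α : ℝ) (hα : 0 < α) (ρ : ℝ≥0∞) (hρ : ρ < 1) :
    ∃ c₁ c₂ : ℝ≥0∞, 0 < c₁ ∧ c₂ < ∞ ∧
      ∀ (a b : EReal), a < b →
      ∀ (n : ℤ) (x : ℤ → ℝ) (τ σ : ℤ → ℝ≥0∞),
        (∀ k, n ≤ k → x k ∈ Iab a b) →
        (∀ k, n ≤ k → x k < x (k + 1)) →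
        (∀ k, n + 1 ≤ k → 0 < τ k ∧ τ k < ∞) →
        (∀ k, n + 1 ≤ k → τ (k + 1) ≤ ρ * τ k) →
        (∀ k, n ≤ k → 0 < σ k ∧ σ k < ∞) →
        (∀ k, n ≤ k → σ k ≤ σ (k + 1)) →
        ∀ g : ℝ → ℝ≥0∞, Measurable g →
          c₁ * (∑' k : {k : ℤ // n + 1 ≤ k},
                τ k.1 * ((∫⁻ s in Ioo (x (k.1 - 1)) (x k.1), g s) ^ α * σ (k.1 - 1))) ≤
              (∑' k : {k : ℤ // n + 1 ≤ k},
                τ k.1 * ⨆ (i : ℤ) (_ : n ≤ i ∧ i < k.1),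
                  (∫⁻ s in Ioo (x i) (x k.1), g s) ^ α * σ i) ∧
            (∑' k : {k : ℤ // n + 1 ≤ k},
                τ k.1 * ⨆ (i : ℤ) (_ : n ≤ i ∧ i < k.1),
                  (∫⁻ s in Ioo (x i) (x k.1), g s) ^ α * σ i) ≤
              c₂ * ∑' k : {k : ℤ // n + 1 ≤ k},
                τ k.1 * ((∫⁻ s in Ioo (x (k.1 - 1)) (x k.1), g s) ^ α * σ (k.1 - 1)) := by
  obtain ⟨q, hρq, hq1⟩ := exists_between hρ
  set θ := q ^ α⁻¹
  have hθα : θ ^ α = q := ENNReal.rpow_inv_rpow hα.ne' q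
  have hθ1 : θ < 1 := ENNReal.rpow_lt_one hq1 (inv_pos.2 hα)
  have hθ0 : θ ≠ 0 := (ENNReal.rpow_pos (pos_of_gt hρq) (ne_top_of_lt hq1)).ne'
  refine ⟨1, (1 - θ)⁻¹ ^ α * (1 - ρ / θ ^ α)⁻¹, one_pos, ?_, ?_⟩
  · have hρθ : ρ / θ ^ α < 1 := ENNReal.div_lt_of_lt_mul (by rwa [hθα, one_mul])
    exact ENNReal.mul_lt_top
      (ENNReal.rpow_lt_top_of_nonneg hα.le (ENNReal.inv_ne_top.2 (tsub_pos_of_lt hθ1).ne'))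
      (ENNReal.inv_lt_top.2 (tsub_pos_of_lt hρθ))
  intro a b _ n x τ σ _ _ _ hτ _ hσ g _
  refine ⟨?_, tsum_mul_iSup_setLIntegral_le hα hθ0 (ne_top_of_lt hθ1) volume n x hτ hσ g⟩
  rw [one_mul]
  refine ENNReal.tsum_le_tsum fun k ↦ mul_le_mul_right ?_ _
  exact le_iSup₂_of_le (k.1 - 1) ⟨by have := k.2; omega, by omega⟩ le_rfl
end
end

section
/- Let -∞ ≤ a < b ≤ ∞, let α > 0, let w be a weight on (a,b) with 0 < W(t) := ∫_t^b w < ∞ for all t ∈ (a,b), and let {x_k}_{k=N}^∞ (N ∈ ℤ) be a discretizing sequence of W, i.e. a strictly increasing sequence in [a,b] with x_N = a and d₁ 2^{-k} ≤ W(x_k) ≤ d₂ 2^{-k} for all k ≥ N, for some constants 0 < d₁ ≤ d₂. Then there exist positive constants c₁, c₂ (depending only on α, d₁, d₂) such that for every n ≥ N and every nonnegative nondecreasing function h on (a,b): c₁ · sup_{k≥n+1} 2^{-kα} h(x_k) ≤ ess sup_{x∈(x_n,b)} W(x)^α h(x) ≤ c₂ · sup_{k≥n+1} 2^{-kα} h(x_k).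 -/
/-!
On a gap `(x k, x (k + 1))` the decreasing function `W` lies between `W (x (k + 1)) ≈ 2^{-(k+1)}`
and `W (x k) ≈ 2^{-k}`, and the nondecreasing `h` lies between `h (x k)` and `h (x (k + 1))`.
Every gap has positive length, so the essential supremum sees the lower estimate on each of them;
conversely every point of `(x n, b)` lies in some gap, because `W (x k) → 0` while `W > 0`
on `(a, b)`.
-/

open MeasureTheory ENNReal Set

noncomputable section

/-- `𝒲(x) = ∫_x^b w(s) ds`. -/
def Wf (w : ℝ → ℝ≥0∞) (b : EReal) (x : EReal) : ℝ≥0∞ := ∫⁻ s in Iab x b, w s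

open Filter Topology

theorem Int.exists_le_and_not_add_one {P : ℤ → Prop} {m n : ℤ} (hmn : m ≤ n) (hm : P m)
    (hn : ¬ P n) : ∃ k, m ≤ k ∧ P k ∧ ¬ P (k + 1) := by
  induction n, hmn using Int.leInduction with
  | base => exact absurd hm hn
  | succ n hmn ih =>
    by_cases hPn : P n
    · exact ⟨n, hmn, hPn, hn⟩
    · exact ih hPn

namespace ENNReal

theorem le_essSup_of_forall_mem_le {α : Type*} [MeasurableSpace α]
    {μ : Measure α} {A : Set α} (hA : μ A ≠ 0) {f : α → ℝ≥0∞} {c : ℝ≥0∞} (hc : ∀ s ∈ A, c ≤ f s) :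
    c ≤ essSup f μ := by
  by_contra hlt
  exact hA <| measure_mono_null (fun s hs hle => hlt ((hc s hs).trans hle))
    (ae_iff.1 (ae_le_essSup f))

theorem tendsto_two_rpow_neg_intCast :
    Tendsto (fun k : ℤ => (2 : ℝ≥0∞) ^ (-(k : ℝ))) atTop (𝓝 0) := by
  have h : ∀ k : ℤ, (2 : ℝ≥0∞) ^ (-(k : ℝ)) = ENNReal.ofReal ((2 : ℝ) ^ (-(k : ℝ))) := fun k => by
    rw [← ENNReal.ofReal_rpow_of_pos two_pos, ENNReal.ofReal_ofNat]
  simp_rw [h, ← ENNReal.ofReal_zero]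
  exact ENNReal.tendsto_ofReal <| (tendsto_rpow_atBot_of_base_gt_one 2 (by norm_num)).comp <|
    tendsto_neg_atTop_atBot.comp tendsto_intCast_atTop_atTop

theorem mul_two_rpow_neg_rpow (d : ℝ≥0∞) {α : ℝ} (hα : 0 ≤ α) (t : ℝ) :
    (d * 2 ^ (-t)) ^ α = d ^ α * 2 ^ (-(t * α)) := by
  rw [mul_rpow_of_nonneg _ _ hα, ← rpow_mul, neg_mul]

theorem two_rpow_neg_add_one_mul (t α : ℝ) :
    (2 : ℝ≥0∞) ^ (-((t + 1) * α)) = 2 ^ (-α) * 2 ^ (-(t * α)) := by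
  rw [← rpow_add _ _ two_ne_zero ofNat_ne_top]
  ring_nf

theorem two_rpow_neg_mul (t α : ℝ) :
    (2 : ℝ≥0∞) ^ (-(t * α)) = 2 ^ α * 2 ^ (-((t + 1) * α)) := by
  rw [← rpow_add _ _ two_ne_zero ofNat_ne_top]
  ring_nf

end ENNReal

theorem Iab_subset_Iab {a a' b b' : EReal} (ha : a' ≤ a) (hb : b ≤ b') : Iab a b ⊆ Iab a' b' :=
  fun _ hs => ⟨ha.trans_lt hs.1, hs.2.trans_le hb⟩

theorem Iab_coe_coe (p q : ℝ) : Iab p q = Ioo p q := by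
  ext s
  simp [Iab]

theorem measurableSet_Iab (a b : EReal) : MeasurableSet (Iab a b) :=
  measurableSet_Ioo.preimage continuous_coe_real_ereal.measurable

theorem Wf_antitone (w : ℝ → ℝ≥0∞) (b : EReal) : Antitone (Wf w b) :=
  fun _ _ hst => lintegral_mono_set (Iab_subset_Iab hst le_rfl)

/-- The left endpoint `a` is encoded as `x N`. -/
structure IsDiscretizingSeq (w : ℝ → ℝ≥0∞) (b : EReal) (d₁ d₂ : ℝ≥0∞) (N : ℤ) (x : ℤ → EReal) :
    Prop where
  lt_add_one : ∀ k, N ≤ k → x k < x (k + 1)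
  le_right : ∀ k, N ≤ k → x k ≤ b
  ne_bot_ne_top : ∀ k, N < k → x k ≠ ⊥ ∧ x k ≠ ⊤
  le_Wf : ∀ k, N ≤ k → d₁ * 2 ^ (-(k : ℝ)) ≤ Wf w b (x k)
  Wf_le : ∀ k, N ≤ k → Wf w b (x k) ≤ d₂ * 2 ^ (-(k : ℝ))

namespace IsDiscretizingSeq

variable {w : ℝ → ℝ≥0∞} {b : EReal} {d₁ d₂ : ℝ≥0∞} {N n k : ℤ} {x : ℤ → EReal}
  {α : ℝ} {h : ℝ → ℝ≥0∞}

theorem strictMonoOn (hx : IsDiscretizingSeq w b d₁ d₂ N x) : StrictMonoOn x (Ici N) :=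
  strictMonoOn_of_lt_add_one ordConnected_Ici fun k _ hk _ => hx.lt_add_one k hk

theorem left_le (hx : IsDiscretizingSeq w b d₁ d₂ N x) (hn : N ≤ n) : x N ≤ x n :=
  hx.strictMonoOn.monotoneOn self_mem_Ici hn hn

theorem lt_right (hx : IsDiscretizingSeq w b d₁ d₂ N x) (hk : N ≤ k) : x k < b :=
  (hx.lt_add_one k hk).trans_le (hx.le_right (k + 1) (by omega))

theorem coe_toReal (hx : IsDiscretizingSeq w b d₁ d₂ N x) (hk : N < k) :
    ((x k).toReal : EReal) = x k :=
  EReal.coe_toReal (hx.ne_bot_ne_top k hk).2 (hx.ne_bot_ne_top k hk).1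

theorem toReal_mem_Iab (hx : IsDiscretizingSeq w b d₁ d₂ N x) (hk : N < k) :
    (x k).toReal ∈ Iab (x N) b := by
  refine ⟨?_, ?_⟩ <;> rw [hx.coe_toReal hk]
  exacts [hx.strictMonoOn self_mem_Ici hk.le hk, hx.lt_right hk.le]

theorem toReal_lt_toReal_add_one (hx : IsDiscretizingSeq w b d₁ d₂ N x) (hk : N < k) :
    (x k).toReal < (x (k + 1)).toReal := by
  rw [← EReal.coe_lt_coe_iff, hx.coe_toReal hk, hx.coe_toReal (by omega)]
  exact hx.lt_add_one k hk.le

theorem Iab_add_one_eq_Ioo (hx : IsDiscretizingSeq w b d₁ d₂ N x) (hk : N < k) :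
    Iab (x k) (x (k + 1)) = Ioo (x k).toReal (x (k + 1)).toReal := by
  rw [← Iab_coe_coe, hx.coe_toReal hk, hx.coe_toReal (by omega)]

theorem exists_le_lt (hx : IsDiscretizingSeq w b d₁ d₂ N x) (hd₂ : d₂ ≠ ⊤) (hn : N ≤ n)
    {t : EReal} (hnt : x n ≤ t) (ht : 0 < Wf w b t) : ∃ k, n ≤ k ∧ x k ≤ t ∧ t < x (k + 1) := by
  have hsmall : ∀ᶠ K : ℤ in atTop, d₂ * 2 ^ (-(K : ℝ)) < Wf w b t := by
    refine (ENNReal.Tendsto.const_mul ENNReal.tendsto_two_rpow_neg_intCast (Or.inr hd₂)).eventually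
      (gt_mem_nhds ?_)
    rwa [mul_zero]
  obtain ⟨K, hnK, hK⟩ := ((eventually_ge_atTop n).and hsmall).exists
  have htK : ¬ x K ≤ t := fun hKt =>
    ((Wf_antitone w b hKt).trans (hx.Wf_le K (hn.trans hnK))).not_gt hK
  obtain ⟨k, hnk, hkt, hk⟩ := Int.exists_le_and_not_add_one (P := (x · ≤ t)) hnK hnt htK
  exact ⟨k, hnk, hkt, not_le.1 hk⟩

theorem le_essSup (hx : IsDiscretizingSeq w b d₁ d₂ N x) (hα : 0 ≤ α) (hn : N ≤ n)
    (hh : MonotoneOn h (Iab (x N) b)) :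
    d₁ ^ α * 2 ^ (-α) * ⨆ (k : ℤ) (_ : n < k), (2 : ℝ≥0∞) ^ (-((k : ℝ) * α)) * h (x k).toReal ≤
      essSup (fun s : ℝ => Wf w b s ^ α * h s) (volume.restrict (Iab (x n) b)) := by
  simp only [ENNReal.mul_iSup, iSup_le_iff]
  intro k hk
  have hNk : N < k := hn.trans_lt hk
  have hsub : Iab (x k) (x (k + 1)) ⊆ Iab (x n) b :=
    Iab_subset_Iab (hx.strictMonoOn.monotoneOn hn (hn.trans hk.le) hk.le)
      (hx.lt_right (by omega)).le
  refine ENNReal.le_essSup_of_forall_mem_le (A := Iab (x k) (x (k + 1))) ?_ fun s hs => ?_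
  · rw [Measure.restrict_eq_self _ hsub, hx.Iab_add_one_eq_Ioo hNk, Real.volume_Ioo]
    exact (ENNReal.ofReal_pos.2 (sub_pos.2 (hx.toReal_lt_toReal_add_one hNk))).ne'
  have hWs : d₁ * 2 ^ (-((k : ℝ) + 1)) ≤ Wf w b s := by
    have := hx.le_Wf (k + 1) (by omega)
    push_cast at this
    exact this.trans (Wf_antitone w b hs.2.le)
  have hhs : h (x k).toReal ≤ h s := by
    refine hh (hx.toReal_mem_Iab hNk) (Iab_subset_Iab (hx.left_le hn) le_rfl (hsub hs)) ?_
    rw [hx.Iab_add_one_eq_Ioo hNk] at hs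
    exact hs.1.le
  calc d₁ ^ α * 2 ^ (-α) * (2 ^ (-((k : ℝ) * α)) * h (x k).toReal)
      = (d₁ * 2 ^ (-((k : ℝ) + 1))) ^ α * h (x k).toReal := by
        rw [ENNReal.mul_two_rpow_neg_rpow _ hα, ENNReal.two_rpow_neg_add_one_mul]
        ring
    _ ≤ Wf w b s ^ α * h s := by gcongr

theorem essSup_le (hx : IsDiscretizingSeq w b d₁ d₂ N x) (hα : 0 ≤ α) (hd₂ : d₂ ≠ ⊤)
    (hW : ∀ t ∈ Iab (x N) b, 0 < Wf w b t) (hn : N ≤ n) (hh : MonotoneOn h (Iab (x N) b)) :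
    essSup (fun s : ℝ => Wf w b s ^ α * h s) (volume.restrict (Iab (x n) b)) ≤
      d₂ ^ α * 2 ^ α * ⨆ (k : ℤ) (_ : n < k), (2 : ℝ≥0∞) ^ (-((k : ℝ) * α)) * h (x k).toReal := by
  refine essSup_le_of_ae_le _ (ae_restrict_of_forall_mem (measurableSet_Iab _ _) fun s hs => ?_)
  have hsN : s ∈ Iab (x N) b := Iab_subset_Iab (hx.left_le hn) le_rfl hs
  obtain ⟨k, hnk, hks, hsk⟩ := hx.exists_le_lt hd₂ hn hs.1.le (hW s hsN)
  have hsk' : s ≤ (x (k + 1)).toReal := by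
    rw [← EReal.coe_le_coe_iff, hx.coe_toReal (by omega)]
    exact hsk.le
  calc Wf w b s ^ α * h s
      ≤ (d₂ * 2 ^ (-(k : ℝ))) ^ α * h (x (k + 1)).toReal := by
        gcongr
        · exact (Wf_antitone w b hks).trans (hx.Wf_le k (hn.trans hnk))
        · exact hh hsN (hx.toReal_mem_Iab (by omega)) hsk'
    _ = d₂ ^ α * 2 ^ α *
          (2 ^ (-(((k + 1 : ℤ) : ℝ) * α)) * h (x (k + 1)).toReal) := by
        rw [ENNReal.mul_two_rpow_neg_rpow _ hα, ENNReal.two_rpow_neg_mul, Int.cast_add,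
          Int.cast_one]
        ring
    _ ≤ _ := by
        refine mul_le_mul_right ?_ _
        exact le_iSup₂ (f := fun (j : ℤ) (_ : n < j) =>
          (2 : ℝ≥0∞) ^ (-((j : ℝ) * α)) * h (x j).toReal) (k + 1) (by omega)

end IsDiscretizingSeq

theorem statement14_general (α : ℝ) (hα : 0 < α) (d₁ d₂ : ℝ≥0∞) (hd₁ : 0 < d₁) (hd₂ : d₂ < ∞) :
    ∃ c₁ c₂ : ℝ≥0∞, 0 < c₁ ∧ c₂ < ∞ ∧
      ∀ (a b : EReal), a < b →
      ∀ w : ℝ → ℝ≥0∞, Measurable w →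
        (∀ x ∈ Iab a b, 0 < w x ∧ w x < ∞) →
        (∀ t ∈ Iab a b, 0 < Wf w b (t : EReal) ∧ Wf w b (t : EReal) < ∞) →
      ∀ (N : ℤ) (x : ℤ → EReal),
        x N = a →
        (∀ k, N ≤ k → x k < x (k + 1)) →
        (∀ k, N ≤ k → a ≤ x k ∧ x k ≤ b) →
        (∀ k, N < k → x k ≠ ⊥ ∧ x k ≠ ⊤) →
        (∀ k, N ≤ k → d₁ * (2 : ℝ≥0∞) ^ (-(k : ℝ)) ≤ Wf w b (x k) ∧
          Wf w b (x k) ≤ d₂ * (2 : ℝ≥0∞) ^ (-(k : ℝ))) →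
        ∀ n : ℤ, N ≤ n →
        ∀ h : ℝ → ℝ≥0∞, MonotoneOn h (Iab a b) →
          c₁ * (⨆ (k : ℤ) (_ : n < k),
                (2 : ℝ≥0∞) ^ (-((k : ℝ) * α)) * h (x k).toReal) ≤
              essSup (fun s : ℝ => Wf w b (s : EReal) ^ α * h s)
                (volume.restrict (Iab (x n) b)) ∧
            essSup (fun s : ℝ => Wf w b (s : EReal) ^ α * h s)
                (volume.restrict (Iab (x n) b)) ≤
              c₂ * ⨆ (k : ℤ) (_ : n < k),
                (2 : ℝ≥0∞) ^ (-((k : ℝ) * α)) * h (x k).toReal := by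
  refine ⟨d₁ ^ α * 2 ^ (-α), d₂ ^ α * 2 ^ α,
    ENNReal.mul_pos (ENNReal.rpow_pos_of_nonneg hd₁ hα.le).ne'
      (ENNReal.rpow_pos two_pos ofNat_ne_top).ne',
    ENNReal.mul_lt_top (ENNReal.rpow_lt_top_of_nonneg hα.le hd₂.ne)
      (ENNReal.rpow_lt_top_of_nonneg hα.le ofNat_ne_top), ?_⟩
  intro a b _ w _ _ hW N x hxN hlt hmem hfin hWx n hn h hh
  subst hxN
  have hx : IsDiscretizingSeq w b d₁ d₂ N x :=
    ⟨hlt, fun k hk => (hmem k hk).2, hfin, fun k hk => (hWx k hk).1, fun k hk => (hWx k hk).2⟩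
  exact ⟨hx.le_essSup hα.le hn hh, hx.essSup_le hα.le hd₂.ne (fun t ht => (hW t ht).1) hn hh⟩

theorem statement14 (α : ℝ) (hα : 0 < α) (d₁ d₂ : ℝ≥0∞) (hd₁ : 0 < d₁) (hd₂ : d₂ < ∞)
    (hd : d₁ ≤ d₂) :
    ∃ c₁ c₂ : ℝ≥0∞, 0 < c₁ ∧ c₂ < ∞ ∧
      ∀ (a b : EReal), a < b →
      ∀ w : ℝ → ℝ≥0∞, Measurable w →
        (∀ x ∈ Iab a b, 0 < w x ∧ w x < ∞) →
        (∀ t ∈ Iab a b, 0 < Wf w b (t : EReal) ∧ Wf w b (t : EReal) < ∞) →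
      ∀ (N : ℤ) (x : ℤ → EReal),
        x N = a →
        (∀ k, N ≤ k → x k < x (k + 1)) →
        (∀ k, N ≤ k → a ≤ x k ∧ x k ≤ b) →
        (∀ k, N < k → x k ≠ ⊥ ∧ x k ≠ ⊤) →
        (∀ k, N ≤ k → d₁ * (2 : ℝ≥0∞) ^ (-(k : ℝ)) ≤ Wf w b (x k) ∧
          Wf w b (x k) ≤ d₂ * (2 : ℝ≥0∞) ^ (-(k : ℝ))) →
        ∀ n : ℤ, N ≤ n →
        ∀ h : ℝ → ℝ≥0∞, MonotoneOn h (Iab a b) →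
          c₁ * (⨆ (k : ℤ) (_ : n < k),
                (2 : ℝ≥0∞) ^ (-((k : ℝ) * α)) * h (x k).toReal) ≤
              essSup (fun s : ℝ => Wf w b (s : EReal) ^ α * h s)
                (volume.restrict (Iab (x n) b)) ∧
            essSup (fun s : ℝ => Wf w b (s : EReal) ^ α * h s)
                (volume.restrict (Iab (x n) b)) ≤
              c₂ * ⨆ (k : ℤ) (_ : n < k),
                (2 : ℝ≥0∞) ^ (-((k : ℝ) * α)) * h (x k).toReal :=
  statement14_general α hα d₁ d₂ hd₁ hd₂
end
end
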